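/- arXiv:1411.3005 — 2 statements merged into one kernel-verified Lean document; each statement's English description precedes it below -/
import Mathlib

section
/- The action of the symmetric group S_r on 𝓔 is free (i.e., if σ·ε = ε for some ε ∈ 𝓔 then σ is the identity permutation) if and only if J = {1, …, r}; in that case 𝓔 has exactly r! elements. -/
/-!
Every row of `ε ∈ 𝓔` is a nondecreasing 0/1 function ending in 1 (the last column sums to `r`),
hence a staircase `j ↦ [t < j]` with `t < r`. When `J = {1,…,r}` the column sums
`#{k | t k < j} = j` force `k ↦ t k` to be a bijection, so `π ↦ ((k, j) ↦ [π⁻¹ k < j])` is an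
`S_r`-equivariant bijection from `S_r` onto 𝓔: the action is free and `|𝓔| = r!`. If some
`m < r` is missing from `J`, the staircases with steps `m - 1` and `m` agree on every column of
`J`, so the transposition of these two rows fixes an element of 𝓔.
-/

/-- The set 𝓔 of functions `ε : {1,…,r} × J → {0,1}` (indexed by `Fin r` and the
subtype of members of `J`), such that each column `j` sums to `j` and each row is
nondecreasing in `j ∈ J`. -/
def IsE (r : ℕ) (J : Finset ℕ) (ε : Fin r → {j // j ∈ J} → ℕ) : Prop :=
  (∀ k j, ε k j ≤ 1) ∧
  (∀ j : {j // j ∈ J}, ∑ k : Fin r, ε k j = (j : ℕ)) ∧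
  (∀ (k : Fin r) (j j' : {j // j ∈ J}), (j : ℕ) ≤ (j' : ℕ) → ε k j ≤ ε k j')

open Finset

theorem Monotone.exists_eq_ite_le_of_le_one {α : Type*} [LinearOrder α] [Fintype α]
    {f : α → ℕ} (hf : Monotone f) (h1 : ∀ a, f a ≤ 1) {a₀ : α} (ha₀ : f a₀ = 1) :
    ∃ m, ∀ a, f a = if m ≤ a then 1 else 0 := by
  have hne : ({a | f a = 1} : Finset α).Nonempty := ⟨a₀, by simpa using ha₀⟩
  refine ⟨({a | f a = 1} : Finset α).min' hne, fun a => ?_⟩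
  split_ifs with ha
  · have := hf ha
    have := (mem_filter.mp (min'_mem _ hne)).2
    have := h1 a
    omega
  · have : f a ≠ 1 := fun h => ha (min'_le _ a (by simpa using h))
    have := h1 a
    omega

theorem surjective_of_card_filter_lt {α : Type*} [Fintype α] {n : ℕ} (t : α → Fin n)
    (ht : ∀ j ∈ Icc 1 n, #{a | (t a : ℕ) < j} = j) : Function.Surjective t := by
  intro i
  have hlt : #{a | (t a : ℕ) < i} < #{a | (t a : ℕ) < i + 1} := by
    rw [ht (i + 1) (mem_Icc.mpr ⟨by omega, i.isLt⟩)]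
    rcases Nat.eq_zero_or_pos (i : ℕ) with h0 | hpos
    · simp [h0]
    · rw [ht i (mem_Icc.mpr ⟨hpos, i.isLt.le⟩)]; omega
  obtain ⟨a, ha, ha'⟩ := exists_mem_notMem_of_card_lt_card hlt
  simp only [mem_filter, mem_univ, true_and] at ha ha'
  exact ⟨a, Fin.ext (by omega)⟩

section Stairs

variable {r : ℕ} {J : Finset ℕ}

def stairs (r : ℕ) (J : Finset ℕ) (π : Equiv.Perm (Fin r)) : Fin r → {j // j ∈ J} → ℕ :=
  fun k j => if (π⁻¹ k : ℕ) < j then 1 else 0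

theorem isE_stairs (hJ : ∀ j ∈ J, j ≤ r) (π : Equiv.Perm (Fin r)) : IsE r J (stairs r J π) := by
  refine ⟨fun k j => by unfold stairs; split <;> simp, fun j => ?_, fun k j j' h => ?_⟩
  · calc ∑ k, stairs r J π k j = ∑ k : Fin r, if (k : ℕ) < j then 1 else 0 :=
          Equiv.sum_comp π⁻¹ (fun k : Fin r => if (k : ℕ) < j then 1 else 0)
      _ = j := by rw [sum_boole, Fin.card_filter_val_lt, min_eq_right (hJ j j.2)]; rfl
  · unfold stairs
    split_ifs <;> omega

theorem stairs_perm_mul (σ π : Equiv.Perm (Fin r)) :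
    (fun k j => stairs r J π (σ⁻¹ k) j) = stairs r J (σ * π) :=
  rfl

theorem stairs_swap_eq_one {m : ℕ} (hmJ : m ∉ J) {a b : Fin r} (ha : (a : ℕ) + 1 = m)
    (hb : (b : ℕ) = m) : stairs r J (Equiv.swap a b) = stairs r J 1 := by
  funext k j
  have hjm : (j : ℕ) ≠ m := fun h => hmJ (h ▸ j.2)
  unfold stairs
  rw [Equiv.swap_inv, inv_one, Equiv.Perm.one_apply]
  rcases eq_or_ne k a with rfl | hka
  · rw [Equiv.swap_apply_left]; split_ifs <;> omega
  rcases eq_or_ne k b with rfl | hkb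
  · rw [Equiv.swap_apply_right]; split_ifs <;> omega
  · rw [Equiv.swap_apply_of_ne_of_ne hka hkb]

theorem stairs_Icc_injective : Function.Injective (stairs r (Icc 1 r)) := by
  intro π π' h
  refine inv_injective (Equiv.ext fun k => Fin.ext ?_)
  have step : ∀ j ∈ Icc 1 r, ((π⁻¹ k : ℕ) < j ↔ (π'⁻¹ k : ℕ) < j) := fun j hj => by
    have := congrFun (congrFun h k) ⟨j, hj⟩
    simp only [stairs] at this
    split_ifs at this <;> omega
  have h₁ := step (π⁻¹ k + 1) (by simp [mem_Icc])
  have h₂ := step (π'⁻¹ k + 1) (by simp [mem_Icc])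
  omega

end Stairs

namespace IsE

variable {r : ℕ} {ε : Fin r → {j // j ∈ Icc 1 r} → ℕ}

theorem apply_top_eq_one (hε : IsE r (Icc 1 r) ε) (k : Fin r) :
    ε k ⟨r, mem_Icc.mpr ⟨k.pos, le_rfl⟩⟩ = 1 := by
  have hcol : ∑ k' : Fin r, ε k' ⟨r, mem_Icc.mpr ⟨k.pos, le_rfl⟩⟩ = ∑ _k' : Fin r, 1 := by
    rw [hε.2.1]; simp
  exact (sum_eq_sum_iff_of_le fun k' _ => hε.1 k' _).mp hcol k (mem_univ k)

theorem exists_threshold (hε : IsE r (Icc 1 r) ε) (k : Fin r) :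
    ∃ t : Fin r, ∀ j, ε k j = if (t : ℕ) < j then 1 else 0 := by
  obtain ⟨m, hm⟩ := Monotone.exists_eq_ite_le_of_le_one (fun j j' h => hε.2.2 k j j' h)
    (hε.1 k) (hε.apply_top_eq_one k)
  have hm' := mem_Icc.mp m.2
  refine ⟨⟨m - 1, by omega⟩, fun j => ?_⟩
  have hj := mem_Icc.mp j.2
  rw [hm j]
  exact if_congr (by rw [← Subtype.coe_le_coe]; simp only; omega) rfl rfl

theorem exists_eq_stairs (hε : IsE r (Icc 1 r) ε) : ∃ π, ε = stairs r (Icc 1 r) π := by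
  choose t ht using hε.exists_threshold
  have hcol : ∀ j ∈ Icc 1 r, #{k | (t k : ℕ) < j} = j := fun j hj => by
    have := hε.2.1 ⟨j, hj⟩
    simp only [ht, sum_boole] at this
    exact_mod_cast this
  refine ⟨(Equiv.ofBijective t (surjective_of_card_filter_lt t hcol).bijective_of_finite).symm, ?_⟩
  funext k j
  exact ht k j

end IsE

theorem setOf_isE_Icc_eq_range (r : ℕ) :
    {ε | IsE r (Icc 1 r) ε} = Set.range (stairs r (Icc 1 r)) := by
  ext ε
  refine ⟨fun hε => ?_, ?_⟩
  · obtain ⟨π, rfl⟩ := hε.exists_eq_stairs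
    exact ⟨π, rfl⟩
  · rintro ⟨π, rfl⟩
    exact isE_stairs (fun j hj => (mem_Icc.mp hj).2) π

theorem stmt_3_general (r : ℕ) (J : Finset ℕ)
    (hJ : J ⊆ Finset.Icc 1 r) (hrJ : r ∈ J) :
    ((∀ (σ : Equiv.Perm (Fin r)) (ε : Fin r → {j // j ∈ J} → ℕ),
        IsE r J ε → (fun k j => ε (σ⁻¹ k) j) = ε → σ = 1) ↔
      J = Finset.Icc 1 r) ∧
    (J = Finset.Icc 1 r →
      {ε : Fin r → {j // j ∈ J} → ℕ | IsE r J ε}.ncard = r.factorial) := by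
  have hJr : ∀ j ∈ J, j ≤ r := fun j hj => (mem_Icc.mp (hJ hj)).2
  refine ⟨⟨fun hfree => ?_, ?_⟩, ?_⟩
  · by_contra hne
    obtain ⟨m, hm, hmJ⟩ := exists_of_ssubset (lt_of_le_of_ne hJ hne)
    have hm1 : 1 ≤ m := (mem_Icc.mp hm).1
    have hmr : m < r := lt_of_le_of_ne (mem_Icc.mp hm).2 fun h => hmJ (h ▸ hrJ)
    have hswap := hfree (Equiv.swap ⟨m - 1, by omega⟩ ⟨m, hmr⟩) (stairs r J 1)
      (isE_stairs hJr 1) (by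
        rw [stairs_perm_mul, mul_one]
        exact stairs_swap_eq_one hmJ (by simp only; omega) rfl)
    exact absurd (Equiv.swap_eq_one_iff.mp hswap) (by simp only [Fin.ext_iff]; omega)
  · rintro rfl σ ε hε hfix
    obtain ⟨π, rfl⟩ := hε.exists_eq_stairs
    rw [stairs_perm_mul] at hfix
    exact mul_eq_right.mp (stairs_Icc_injective hfix)
  · rintro rfl
    rw [setOf_isE_Icc_eq_range, ← Nat.card_coe_set_eq,
      Nat.card_range_of_injective stairs_Icc_injective, Nat.card_perm, Nat.card_fin]

/-- the action of `S_r` on 𝓔 is free iff `J = {1,…,r}`; in that case 𝓔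
has exactly `r!` elements. -/
theorem stmt_3 (r : ℕ) (hr : 1 ≤ r) (J : Finset ℕ)
    (hJ : J ⊆ Finset.Icc 1 r) (hrJ : r ∈ J) :
    ((∀ (σ : Equiv.Perm (Fin r)) (ε : Fin r → {j // j ∈ J} → ℕ),
        IsE r J ε → (fun k j => ε (σ⁻¹ k) j) = ε → σ = 1) ↔
      J = Finset.Icc 1 r) ∧
    (J = Finset.Icc 1 r →
      {ε : Fin r → {j // j ∈ J} → ℕ | IsE r J ε}.ncard = r.factorial) :=
  stmt_3_general r J hJ hrJ
end

section
/- Every Y ∈ End_F(V) commuting with X belongs to 𝔫^{≥0}; that is, in the block decomposition End_F(V) = ⊕ Hom_F(V_j^i, V_{j'}^{i'}), every nonzero block of an endomorphism commuting with X occurs for a pair with p(i,j) ≥ p(i',j'). -/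
/-- Index type of the standard basis `e(i,j,k)`: triples `(i,j,k)` with
`1 ≤ i ≤ j ≤ r`, `1 ≤ k ≤ d j`. -/
def RIdx (r : ℕ) (d : ℕ → ℕ) : Type :=
  {x : ℕ × ℕ × ℕ //
    1 ≤ x.1 ∧ x.1 ≤ x.2.1 ∧ x.2.1 ≤ r ∧ 1 ≤ x.2.2 ∧ x.2.2 ≤ d x.2.1}

/-- The weight `p(i,j) = (i−1)(2r−i+2)/2 + (r−j+1)`. -/
def pfun (r i j : ℕ) : ℤ :=
  ((i : ℤ) - 1) * (2 * (r : ℤ) - (i : ℤ) + 2) / 2 + ((r : ℤ) - (j : ℤ) + 1)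

/-- `𝔫^{≥t}`: the subspace of endomorphisms all of whose nonzero blocks
`Hom(V_j^i, V_{j'}^{i'})` (equivalently, nonzero matrix entries in the basis `e`)
occur for pairs with `p(i,j) − p(i',j') ≥ t`. -/
def nGE {F : Type*} [Field F] {V : Type*} [AddCommGroup V] [Module F V]
    (r : ℕ) (d : ℕ → ℕ) (e : Module.Basis (RIdx r d) F V) (t : ℤ) :
    Set (Module.End F V) :=
  {A | ∀ x y : RIdx r d, e.repr (A (e x)) y ≠ 0 →
    t ≤ pfun r x.val.1 x.val.2.1 - pfun r y.val.1 y.val.2.1}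

/-
In the basis `e`, `X` is a nilpotent shift with one Jordan chain `e(j,j,k) ↦ ⋯ ↦ e(1,j,k) ↦ 0`
for each `(j,k)`. If `Y` commutes with `X` and `e(i',j',k')` occurs in `Y e(i,j,k)`, then
* `i' ≤ i`, because `X^i` kills `e(i,j,k)`, hence `Y e(i,j,k)`, while it moves the coordinate
  at `(i',j',k')` to `(i'-i,j',k')` without loss when `i' > i`;
* `i' + (j - i) ≤ j'`, because `e(i,j,k) = X^(j-i) e(j,j,k)`, so `Y e(i,j,k)` lies in the image
  of `X^(j-i)`, which is spanned by the `e(i'',j'',k'')` with `i'' + (j - i) ≤ j''`.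
These two inequalities give `p(i',j') ≤ p(i,j)` by a short computation with the quadratic `p`.
-/

namespace RIdx

variable {r : ℕ} {d : ℕ → ℕ}

theorem ext' {x y : RIdx r d} (h₁ : x.val.1 = y.val.1) (h₂ : x.val.2 = y.val.2) : x = y :=
  Subtype.ext (Prod.ext h₁ h₂)

def shiftDown (x : RIdx r d) (m : ℕ) (h : m < x.val.1) : RIdx r d :=
  ⟨(x.val.1 - m, x.val.2), by
    obtain ⟨-, hij, hjr, hk, hkd⟩ := x.2
    exact ⟨by omega, by dsimp only; omega, hjr, hk, hkd⟩⟩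

def top (x : RIdx r d) : RIdx r d :=
  ⟨(x.val.2.1, x.val.2), by
    obtain ⟨hi, hij, hjr, hk, hkd⟩ := x.2
    exact ⟨by omega, le_rfl, hjr, hk, hkd⟩⟩

theorem shiftDown_inj {x y : RIdx r d} {m : ℕ} (hx : m < x.val.1) (hy : m < y.val.1) :
    x.shiftDown m hx = y.shiftDown m hy ↔ x = y := by
  refine ⟨fun h ↦ ext' ?_ (congrArg (·.val.2) h), fun h ↦ by subst h; rfl⟩
  have := congrArg (·.val.1) h
  dsimp only [shiftDown] at this
  omega

theorem sub_lt_top (x : RIdx r d) : x.val.2.1 - x.val.1 < x.top.val.1 := by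
  obtain ⟨hi, hij, -⟩ := x.2
  dsimp only [top]
  omega

theorem top_shiftDown (x : RIdx r d) : x.top.shiftDown _ x.sub_lt_top = x :=
  ext' (by have := x.2.2.1; dsimp only [shiftDown, top]; omega) rfl

end RIdx

section JordanShift

variable {F : Type*} [Field F] {V : Type*} [AddCommGroup V] [Module F V] {r : ℕ} {d : ℕ → ℕ}

structure IsJordanShift (e : Module.Basis (RIdx r d) F V) (X : Module.End F V) : Prop where
  apply_of_eq_one : ∀ x : RIdx r d, x.val.1 = 1 → X (e x) = 0
  apply_of_eq_succ : ∀ x y : RIdx r d, x.val.1 = y.val.1 + 1 → x.val.2 = y.val.2 →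
    X (e x) = e y

variable {e : Module.Basis (RIdx r d) F V} {X : Module.End F V}

namespace IsJordanShift

theorem pow_apply_basis (hX : IsJordanShift e X) (m : ℕ) (x : RIdx r d) :
    (X ^ m) (e x) = if h : m < x.val.1 then e (x.shiftDown m h) else 0 := by
  induction m generalizing x with
  | zero => rw [pow_zero, Module.End.one_apply, dif_pos (show 0 < x.val.1 from x.2.1)]; rfl
  | succ m ih =>
    rw [pow_succ, Module.End.mul_apply]
    by_cases hx : x.val.1 = 1
    · rw [hX.apply_of_eq_one x hx, map_zero, dif_neg (by omega)]
    · have hx1 : 1 < x.val.1 := lt_of_le_of_ne x.2.1 (Ne.symm hx)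
      rw [hX.apply_of_eq_succ x (x.shiftDown 1 hx1) (by dsimp only [RIdx.shiftDown]; omega) rfl,
        ih]
      by_cases hm : m + 1 < x.val.1
      · rw [dif_pos (by dsimp only [RIdx.shiftDown]; omega), dif_pos hm]
        exact congrArg e (RIdx.ext' (by dsimp only [RIdx.shiftDown]; omega) rfl)
      · rw [dif_neg (by dsimp only [RIdx.shiftDown]; omega), dif_neg hm]

theorem pow_apply_of_le (hX : IsJordanShift e X) {m : ℕ} {x : RIdx r d} (h : x.val.1 ≤ m) :
    (X ^ m) (e x) = 0 := by
  rw [hX.pow_apply_basis, dif_neg (not_lt.2 h)]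

theorem pow_apply_top (hX : IsJordanShift e X) (x : RIdx r d) :
    (X ^ (x.val.2.1 - x.val.1)) (e x.top) = e x := by
  rw [hX.pow_apply_basis, dif_pos x.sub_lt_top, x.top_shiftDown]

theorem repr_pow_apply_shiftDown (hX : IsJordanShift e X) {m : ℕ} (v : V) {y : RIdx r d}
    (h : m < y.val.1) : e.repr ((X ^ m) v) (y.shiftDown m h) = e.repr v y := by
  classical
  suffices Finsupp.lapply (y.shiftDown m h) ∘ₗ e.repr.toLinearMap ∘ₗ X ^ m =
      Finsupp.lapply y ∘ₗ e.repr.toLinearMap from LinearMap.congr_fun this v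
  refine e.ext fun w ↦ ?_
  simp only [LinearMap.comp_apply, LinearEquiv.coe_coe, Finsupp.lapply_apply,
    hX.pow_apply_basis, Module.Basis.repr_self]
  split_ifs with hw
  · rw [Module.Basis.repr_self, Finsupp.single_apply, Finsupp.single_apply, RIdx.shiftDown_inj]
  · rw [map_zero, Finsupp.zero_apply, Finsupp.single_eq_of_ne]
    rintro rfl
    exact hw h

theorem repr_pow_apply_eq_zero (hX : IsJordanShift e X) {m : ℕ} (v : V) {y : RIdx r d}
    (h : y.val.2.1 < y.val.1 + m) : e.repr ((X ^ m) v) y = 0 := by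
  classical
  suffices Finsupp.lapply y ∘ₗ e.repr.toLinearMap ∘ₗ X ^ m = 0 from LinearMap.congr_fun this v
  refine e.ext fun w ↦ ?_
  simp only [LinearMap.comp_apply, LinearEquiv.coe_coe, Finsupp.lapply_apply,
    hX.pow_apply_basis, LinearMap.zero_apply]
  split_ifs with hw
  · rw [Module.Basis.repr_self, Finsupp.single_eq_of_ne]
    rintro rfl
    have := w.2.2.1
    dsimp only [RIdx.shiftDown] at h
    omega
  · simp

end IsJordanShift

end JordanShift

theorem two_mul_pfun (r i j : ℕ) :
    2 * pfun r i j = ((i : ℤ) - 1) * (2 * r - i + 2) + 2 * (r - j + 1) := by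
  have hdvd : (2 : ℤ) ∣ ((i : ℤ) - 1) * (2 * r - i + 2) := by
    have h : ((i : ℤ) - 1) * (2 * r - i + 2) = 2 * ((r + 1) * (i - 1)) - (i - 1) * (i - 1 + 1) := by
      ring
    rw [h]
    exact dvd_sub (dvd_mul_right 2 _) (Int.even_mul_succ_self _).two_dvd
  rw [pfun, mul_add, Int.mul_ediv_cancel' hdvd]

theorem pfun_le_pfun {r a b j j' : ℕ} (hab : a ≤ b) (hbr : b ≤ r) (hj : a + j ≤ b + j') :
    pfun r a j' ≤ pfun r b j := by
  suffices 2 * pfun r a j' ≤ 2 * pfun r b j by omega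
  rw [two_mul_pfun, two_mul_pfun]
  have hab' : (a : ℤ) ≤ b := by exact_mod_cast hab
  have hbr' : (b : ℤ) ≤ r := by exact_mod_cast hbr
  have hj' : (a : ℤ) + j ≤ b + j' := by exact_mod_cast hj
  nlinarith [mul_nonneg (sub_nonneg.2 hab') (by linarith : (0 : ℤ) ≤ 2 * r + 1 - a - b)]

theorem stmt_12_general (r : ℕ) (d : ℕ → ℕ)
    (F : Type*) [Field F] (V : Type*) [AddCommGroup V] [Module F V]
    (e : Module.Basis (RIdx r d) F V) (X : Module.End F V)
    (hX0 : ∀ x : RIdx r d, x.val.1 = 1 → X (e x) = 0)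
    (hXs : ∀ x y : RIdx r d, x.val.1 = y.val.1 + 1 → x.val.2 = y.val.2 →
      X (e x) = e y) :
    ∀ Y : Module.End F V, Y ∘ₗ X = X ∘ₗ Y → Y ∈ nGE r d e 0 := by
  intro Y hYX x y hne
  have hX : IsJordanShift e X := ⟨hX0, hXs⟩
  have hcomm (m : ℕ) (v : V) : (X ^ m) (Y v) = Y ((X ^ m) v) :=
    (LinearMap.congr_fun ((Commute.pow_right (hYX : Commute Y X) m).eq) v).symm
  have hi : y.val.1 ≤ x.val.1 := by
    by_contra! h
    apply hne
    rw [← hX.repr_pow_apply_shiftDown _ h, hcomm, hX.pow_apply_of_le le_rfl, map_zero, map_zero,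
      Finsupp.zero_apply]
  have hj : y.val.1 + x.val.2.1 ≤ x.val.1 + y.val.2.1 := by
    by_contra! h
    apply hne
    rw [← hX.pow_apply_top x, ← hcomm]
    exact hX.repr_pow_apply_eq_zero _ (by omega)
  have hxr : x.val.1 ≤ r := x.2.2.1.trans x.2.2.2.1
  exact sub_nonneg.2 (pfun_le_pfun hi hxr hj)

/-- every endomorphism commuting with `X` lies in `𝔫^{≥0}`. -/
theorem stmt_12 (r : ℕ) (hr : 1 ≤ r) (d : ℕ → ℕ) (hd : 1 ≤ d r)
    (F : Type*) [Field F] [CharZero F] (V : Type*) [AddCommGroup V] [Module F V]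
    (e : Module.Basis (RIdx r d) F V) (X : Module.End F V)
    (hX0 : ∀ x : RIdx r d, x.val.1 = 1 → X (e x) = 0)
    (hXs : ∀ x y : RIdx r d, x.val.1 = y.val.1 + 1 → x.val.2 = y.val.2 →
      X (e x) = e y) :
    ∀ Y : Module.End F V, Y ∘ₗ X = X ∘ₗ Y → Y ∈ nGE r d e 0 :=
  stmt_12_general r d F V e X hX0 hXs
end
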